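/- Let and p̂ be elements of a (possibly noncommutative) associative ℝ-algebra, and define on the free module of rank 3 over this algebra the antisymmetric bracket with II^ℏ structure constants μ̂₂₃¹ = (p̂+p₀)/(2p₀), μ̂₂₃² = ωq̂/(2p₀), μ̂₃₁¹ = ωq̂/(2p₀), μ̂₃₁² = −(p̂−p₀)/(2p₀), others zero. Then the Jacobi identity holds identically, i.e. all three coordinates of the quantum Jacobian Ĵ_ℏ(x,y,z) vanish, without assuming any commutation relation between q̂ and p̂. -/
import Mathlib


/-- Antisymmetric bracket on the rank-3 free module over an ℝ-algebra `A`,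
defined by structure constants `m i j k ∈ A`. -/
noncomputable def qbkt {A : Type*} [Ring A] [Algebra ℝ A]
    (m : Fin 3 → Fin 3 → Fin 3 → A) (x y : Fin 3 → A) : Fin 3 → A :=
  fun k => ∑ i : Fin 3, ∑ j : Fin 3, x i * y j * m i j k

/-- The quantum Jacobian `Ĵ(x,y,z) = [[x,y],z] + [[y,z],x] + [[z,x],y]`. -/
noncomputable def qjac {A : Type*} [Ring A] [Algebra ℝ A]
    (m : Fin 3 → Fin 3 → Fin 3 → A) (x y z : Fin 3 → A) : Fin 3 → A :=
  qbkt m (qbkt m x y) z + qbkt m (qbkt m y z) x + qbkt m (qbkt m z x) y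

/-- Structure constants of the quantum algebra II^ℏ:
`μ̂₂₃¹ = (p̂+p₀)/(2p₀)`, `μ̂₂₃² = ωq̂/(2p₀)`, `μ̂₃₁¹ = ωq̂/(2p₀)`, `μ̂₃₁² = −(p̂−p₀)/(2p₀)`. -/
noncomputable def muIIh {A : Type*} [Ring A] [Algebra ℝ A]
    (qh ph : A) (ω p₀ : ℝ) : Fin 3 → Fin 3 → Fin 3 → A :=
  ![![![0, 0, 0], ![0, 0, 0],
      ![-((2 * p₀)⁻¹ • (ω • qh)), (2 * p₀)⁻¹ • (ph - p₀ • (1 : A)), 0]],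
    ![![0, 0, 0], ![0, 0, 0],
      ![(2 * p₀)⁻¹ • (ph + p₀ • (1 : A)), (2 * p₀)⁻¹ • (ω • qh), 0]],
    ![![(2 * p₀)⁻¹ • (ω • qh), -((2 * p₀)⁻¹ • (ph - p₀ • (1 : A))), 0],
      ![-((2 * p₀)⁻¹ • (ph + p₀ • (1 : A))), -((2 * p₀)⁻¹ • (ω • qh)), 0],
      ![0, 0, 0]]]

lemma qbkt_basis {A : Type*} [Ring A] [Algebra ℝ A]
    (m : Fin 3 → Fin 3 → Fin 3 → A) (v : Fin 3 → A) (j : Fin 3) :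
    qbkt m v (fun l => if l = j then 1 else 0) =
      fun k => ∑ a : Fin 3, v a * m a j k := by
  funext k
  simp only [qbkt]
  refine Finset.sum_congr rfl fun a _ => ?_
  rw [Fin.sum_univ_three]
  fin_cases j <;> simp

lemma qbkt_basis_basis {A : Type*} [Ring A] [Algebra ℝ A]
    (m : Fin 3 → Fin 3 → Fin 3 → A) (i j : Fin 3) :
    qbkt m (fun l => if l = i then 1 else 0) (fun l => if l = j then 1 else 0) = m i j := by
  rw [qbkt_basis]
  funext k
  rw [Fin.sum_univ_three]
  fin_cases i <;> simp

private lemma finmk_two (h : 2 < 3) : (⟨2, h⟩ : Fin 3) = 2 := rfl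

private lemma mu_000 {A : Type*} [Ring A] [Algebra ℝ A]
    (qh ph : A) (ω p₀ : ℝ) : muIIh qh ph ω p₀ 0 0 0 = 0 := rfl

private lemma mu_001 {A : Type*} [Ring A] [Algebra ℝ A]
    (qh ph : A) (ω p₀ : ℝ) : muIIh qh ph ω p₀ 0 0 1 = 0 := rfl

private lemma mu_002 {A : Type*} [Ring A] [Algebra ℝ A]
    (qh ph : A) (ω p₀ : ℝ) : muIIh qh ph ω p₀ 0 0 2 = 0 := rfl

private lemma mu_010 {A : Type*} [Ring A] [Algebra ℝ A]
    (qh ph : A) (ω p₀ : ℝ) : muIIh qh ph ω p₀ 0 1 0 = 0 := rfl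

private lemma mu_011 {A : Type*} [Ring A] [Algebra ℝ A]
    (qh ph : A) (ω p₀ : ℝ) : muIIh qh ph ω p₀ 0 1 1 = 0 := rfl

private lemma mu_012 {A : Type*} [Ring A] [Algebra ℝ A]
    (qh ph : A) (ω p₀ : ℝ) : muIIh qh ph ω p₀ 0 1 2 = 0 := rfl

private lemma mu_020 {A : Type*} [Ring A] [Algebra ℝ A]
    (qh ph : A) (ω p₀ : ℝ) : muIIh qh ph ω p₀ 0 2 0 = -((2 * p₀)⁻¹ • (ω • qh)) := rfl

private lemma mu_021 {A : Type*} [Ring A] [Algebra ℝ A]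
    (qh ph : A) (ω p₀ : ℝ) : muIIh qh ph ω p₀ 0 2 1 = (2 * p₀)⁻¹ • (ph - p₀ • (1 : A)) := rfl

private lemma mu_022 {A : Type*} [Ring A] [Algebra ℝ A]
    (qh ph : A) (ω p₀ : ℝ) : muIIh qh ph ω p₀ 0 2 2 = 0 := rfl

private lemma mu_100 {A : Type*} [Ring A] [Algebra ℝ A]
    (qh ph : A) (ω p₀ : ℝ) : muIIh qh ph ω p₀ 1 0 0 = 0 := rfl

private lemma mu_101 {A : Type*} [Ring A] [Algebra ℝ A]
    (qh ph : A) (ω p₀ : ℝ) : muIIh qh ph ω p₀ 1 0 1 = 0 := rfl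

private lemma mu_102 {A : Type*} [Ring A] [Algebra ℝ A]
    (qh ph : A) (ω p₀ : ℝ) : muIIh qh ph ω p₀ 1 0 2 = 0 := rfl

private lemma mu_110 {A : Type*} [Ring A] [Algebra ℝ A]
    (qh ph : A) (ω p₀ : ℝ) : muIIh qh ph ω p₀ 1 1 0 = 0 := rfl

private lemma mu_111 {A : Type*} [Ring A] [Algebra ℝ A]
    (qh ph : A) (ω p₀ : ℝ) : muIIh qh ph ω p₀ 1 1 1 = 0 := rfl

private lemma mu_112 {A : Type*} [Ring A] [Algebra ℝ A]
    (qh ph : A) (ω p₀ : ℝ) : muIIh qh ph ω p₀ 1 1 2 = 0 := rfl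

private lemma mu_120 {A : Type*} [Ring A] [Algebra ℝ A]
    (qh ph : A) (ω p₀ : ℝ) : muIIh qh ph ω p₀ 1 2 0 = (2 * p₀)⁻¹ • (ph + p₀ • (1 : A)) := rfl

private lemma mu_121 {A : Type*} [Ring A] [Algebra ℝ A]
    (qh ph : A) (ω p₀ : ℝ) : muIIh qh ph ω p₀ 1 2 1 = (2 * p₀)⁻¹ • (ω • qh) := rfl

private lemma mu_122 {A : Type*} [Ring A] [Algebra ℝ A]
    (qh ph : A) (ω p₀ : ℝ) : muIIh qh ph ω p₀ 1 2 2 = 0 := rfl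

private lemma mu_200 {A : Type*} [Ring A] [Algebra ℝ A]
    (qh ph : A) (ω p₀ : ℝ) : muIIh qh ph ω p₀ 2 0 0 = (2 * p₀)⁻¹ • (ω • qh) := rfl

private lemma mu_201 {A : Type*} [Ring A] [Algebra ℝ A]
    (qh ph : A) (ω p₀ : ℝ) : muIIh qh ph ω p₀ 2 0 1 = -((2 * p₀)⁻¹ • (ph - p₀ • (1 : A))) := rfl

private lemma mu_202 {A : Type*} [Ring A] [Algebra ℝ A]
    (qh ph : A) (ω p₀ : ℝ) : muIIh qh ph ω p₀ 2 0 2 = 0 := rfl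

private lemma mu_210 {A : Type*} [Ring A] [Algebra ℝ A]
    (qh ph : A) (ω p₀ : ℝ) : muIIh qh ph ω p₀ 2 1 0 = -((2 * p₀)⁻¹ • (ph + p₀ • (1 : A))) := rfl

private lemma mu_211 {A : Type*} [Ring A] [Algebra ℝ A]
    (qh ph : A) (ω p₀ : ℝ) : muIIh qh ph ω p₀ 2 1 1 = -((2 * p₀)⁻¹ • (ω • qh)) := rfl

private lemma mu_212 {A : Type*} [Ring A] [Algebra ℝ A]
    (qh ph : A) (ω p₀ : ℝ) : muIIh qh ph ω p₀ 2 1 2 = 0 := rfl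

private lemma mu_220 {A : Type*} [Ring A] [Algebra ℝ A]
    (qh ph : A) (ω p₀ : ℝ) : muIIh qh ph ω p₀ 2 2 0 = 0 := rfl

private lemma mu_221 {A : Type*} [Ring A] [Algebra ℝ A]
    (qh ph : A) (ω p₀ : ℝ) : muIIh qh ph ω p₀ 2 2 1 = 0 := rfl

private lemma mu_222 {A : Type*} [Ring A] [Algebra ℝ A]
    (qh ph : A) (ω p₀ : ℝ) : muIIh qh ph ω p₀ 2 2 2 = 0 := rfl

set_option maxHeartbeats 2000000 in
/-- The quantum algebra II^ℏ satisfies the Jacobi identity on all basis triples,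
without assuming any commutation relation between `q̂` and `p̂`. -/
theorem IIh_jacobi {A : Type*} [Ring A] [Algebra ℝ A]
    (qh ph : A) (ω p₀ : ℝ) (hp₀ : p₀ ≠ 0) :
    ∀ i j k : Fin 3,
      qjac (muIIh qh ph ω p₀)
        (fun l => if l = i then 1 else 0)
        (fun l => if l = j then 1 else 0)
        (fun l => if l = k then 1 else 0) = 0 := by
  intro i j k
  simp only [qjac, qbkt_basis_basis, qbkt_basis]
  funext l
  simp only [Pi.add_apply, Pi.zero_apply, Fin.sum_univ_three]
  fin_cases i <;> fin_cases j <;> fin_cases k <;> fin_cases l <;>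
  · simp only [Fin.mk_zero, Fin.mk_one, finmk_two]
    simp [mu_000, mu_001, mu_002, mu_010, mu_011, mu_012, mu_020, mu_021, mu_022, mu_100, mu_101, mu_102, mu_110, mu_111, mu_112, mu_120, mu_121, mu_122, mu_200, mu_201, mu_202, mu_210, mu_211, mu_212, mu_220, mu_221, mu_222,
      mul_add, add_mul, mul_sub, sub_mul,
      smul_mul_assoc, mul_smul_comm, smul_smul]
    try (match_scalars <;> · try field_simp
                             try ring)
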